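/- arXiv:1805.08341 — 5 statements merged into one kernel-verified Lean document; each statement's English description precedes it below -/
import Mathlib

section
/- Let C = [[4,2],[2,3]]. Then every 5×2 integer matrix D with nonnegative entries, each row nonzero, satisfying D^T D = C, has rows that are a permutation of (1,0),(1,0),(1,1),(1,1),(0,1). -/
/-!
The quadratic form `q(a, b) = a² - ab + b²` is at least `1` on nonzero vectors of `ℕ²`, and
`∑ᵢ q(Dᵢ) = C₀₀ + C₁₁ - C₀₁ = 5` is the number of rows, so every row `Dᵢ` has `q(Dᵢ) = 1`, i.e. is
`(1,0)`, `(0,1)` or `(1,1)`. On these three vectors the functions `a²`, `b²` and `ab` form a basis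
of all functions, so the number of rows equal to any given vector is a linear combination of the
entries of `Dᵀ D`. Hence `D` agrees up to a permutation of rows with the claimed matrix, which has
the same Cartan matrix.
-/

open Matrix Finset

lemma mul_add_one_le_mul_self_add_mul_self {a b : ℕ} (h : a ≠ 0 ∨ b ≠ 0) :
    a * b + 1 ≤ a * a + b * b := by
  rcases h with h | h <;> rcases Nat.lt_or_ge a b with hab | hab <;>
    nlinarith [Nat.pos_of_ne_zero h]

lemma eq_of_mul_self_add_mul_self_eq_mul_add_one {a b : ℕ} (h : a * a + b * b = a * b + 1) :
    a = 1 ∧ b = 0 ∨ a = 0 ∧ b = 1 ∨ a = 1 ∧ b = 1 := by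
  zify at h
  have ha : a ≤ 1 := by nlinarith [sq_nonneg (2 * (b : ℤ) - a)]
  have hb : b ≤ 1 := by nlinarith [sq_nonneg (2 * (a : ℤ) - b)]
  interval_cases a <;> interval_cases b <;> simp_all

def normOneRows : Finset (Fin 2 → ℕ) := {![1, 0], ![0, 1], ![1, 1]}

lemma mem_normOneRows_of_mul_self_add_mul_self_eq {r : Fin 2 → ℕ}
    (h : r 0 * r 0 + r 1 * r 1 = r 0 * r 1 + 1) : r ∈ normOneRows := by
  have hr : r = ![r 0, r 1] := by ext j; fin_cases j <;> rfl
  rcases eq_of_mul_self_add_mul_self_eq_mul_add_one h with ⟨h0, h1⟩ | ⟨h0, h1⟩ | ⟨h0, h1⟩ <;>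
    rw [hr, h0, h1] <;> decide

variable {ι : Type*} [Fintype ι]

lemma transpose_mul_self_apply (D : Matrix ι (Fin 2) ℕ) (j k : Fin 2) :
    (Dᵀ * D) j k = ∑ i, D i j * D i k := by
  simp [mul_apply]

lemma rows_mem_normOneRows (D : Matrix ι (Fin 2) ℕ) (hrow : ∀ i, D i ≠ 0)
    (hq : (Dᵀ * D) 0 0 + (Dᵀ * D) 1 1 = (Dᵀ * D) 0 1 + Fintype.card ι) (i : ι) :
    D i ∈ normOneRows := by
  have hle : ∀ i ∈ univ, D i 0 * D i 1 + 1 ≤ D i 0 * D i 0 + D i 1 * D i 1 := fun i _ ↦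
    mul_add_one_le_mul_self_add_mul_self <| by
      by_contra! h
      exact hrow i (funext fun j ↦ by fin_cases j <;> simp [h])
  have hsum : ∑ i, (D i 0 * D i 1 + 1) = ∑ i, (D i 0 * D i 0 + D i 1 * D i 1) := by
    simp only [sum_add_distrib, ← transpose_mul_self_apply, hq, sum_const, card_univ, smul_eq_mul,
      mul_one]
  exact mem_normOneRows_of_mul_self_add_mul_self_eq
    ((sum_eq_sum_iff_of_le hle).1 hsum i (mem_univ i)).symm

lemma sum_comp_rows_eq (D : Matrix ι (Fin 2) ℕ) (hD : ∀ i, D i ∈ normOneRows)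
    (φ : (Fin 2 → ℕ) → ℤ) :
    ∑ i, φ (D i) = φ ![1, 0] * (Dᵀ * D) 0 0 + φ ![0, 1] * (Dᵀ * D) 1 1
      + (φ ![1, 1] - φ ![1, 0] - φ ![0, 1]) * (Dᵀ * D) 0 1 := by
  have hφ : ∀ i, φ (D i) = φ ![1, 0] * (D i 0 * D i 0 : ℕ) + φ ![0, 1] * (D i 1 * D i 1 : ℕ)
      + (φ ![1, 1] - φ ![1, 0] - φ ![0, 1]) * (D i 0 * D i 1 : ℕ) := by
    intro i
    have := hD i
    simp only [normOneRows, mem_insert, mem_singleton] at this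
    rcases this with h | h | h <;> simp [h]
  simp only [transpose_mul_self_apply, hφ, sum_add_distrib, ← mul_sum, Nat.cast_sum]

lemma sum_comp_rows_eq_of_transpose_mul_self_eq {D D' : Matrix ι (Fin 2) ℕ}
    (hD : ∀ i, D i ∈ normOneRows) (hD' : ∀ i, D' i ∈ normOneRows) (h : Dᵀ * D = D'ᵀ * D')
    (φ : (Fin 2 → ℕ) → ℤ) :
    ∑ i, φ (D i) = ∑ i, φ (D' i) := by
  rw [sum_comp_rows_eq D hD, sum_comp_rows_eq D' hD', h]

lemma Equiv.Perm.exists_comp_eq_of_card_fiber_eq {ι α : Type*} [Finite ι] {f g : ι → α}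
    (h : ∀ a, Nat.card {i // f i = a} = Nat.card {i // g i = a}) :
    ∃ σ : Equiv.Perm ι, f ∘ σ = g :=
  ⟨Equiv.ofFiberEquiv fun a ↦ (Finite.card_eq.1 (h a).symm).some,
    funext <| Equiv.ofFiberEquiv_map _⟩

lemma exists_perm_rows_eq_of_transpose_mul_self_eq {D D' : Matrix ι (Fin 2) ℕ}
    (hD : ∀ i, D i ∈ normOneRows) (hD' : ∀ i, D' i ∈ normOneRows) (h : Dᵀ * D = D'ᵀ * D') :
    ∃ σ : Equiv.Perm ι, ∀ i, D (σ i) = D' i := by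
  classical
  have hcard (M : Matrix ι (Fin 2) ℕ) (r : Fin 2 → ℕ) :
      (Nat.card {i // M i = r} : ℤ) = ∑ i, if M i = r then 1 else 0 := by
    -- `congr!` reconciles the classical and the computable decidability instances
    rw [Nat.card_eq_fintype_card, Fintype.card_subtype, natCast_card_filter]; congr!
  obtain ⟨σ, hσ⟩ := Equiv.Perm.exists_comp_eq_of_card_fiber_eq (f := D) (g := D') fun r ↦ by
    have := sum_comp_rows_eq_of_transpose_mul_self_eq hD hD' h fun s ↦ if s = r then 1 else 0
    rw [← hcard, ← hcard] at this
    exact_mod_cast this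
  exact ⟨σ, congrFun hσ⟩

/-- The decomposition matrix of `A(2,2,1)`: every `5 × 2` matrix `D` with
natural-number entries, each row nonzero, satisfying `Dᵀ * D = C` for the Cartan matrix
`C = !![3,1;1,3]`, has rows that are a permutation of `(1,0),(1,0),(1,1),(1,1),(0,1)`. -/
theorem decomposition_matrix_A221
    (D : Matrix (Fin 5) (Fin 2) ℕ)
    (hrow : ∀ i, (fun j => D i j) ≠ 0)
    (hC : Dᵀ * D = !![4, 2; 2, 3]) :
    ∃ σ : Equiv.Perm (Fin 5),
      ∀ i, (fun j => D (σ i) j) =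
        ![![1, 0], ![1, 0], ![1, 1], ![1, 1], ![0, 1]] i := by
  set T : Matrix (Fin 5) (Fin 2) ℕ := !![1, 0; 1, 0; 1, 1; 1, 1; 0, 1]
  have hT : Tᵀ * T = !![4, 2; 2, 3] := by decide
  have hTrows : ∀ i, T i ∈ normOneRows := by intro i; fin_cases i <;> decide
  have hDrows := rows_mem_normOneRows D hrow (by simp [hC])
  exact exists_perm_rows_eq_of_transpose_mul_self_eq hDrows hTrows (hC.trans hT.symm)
end

section
/- Let C = [[4,2],[2,4]]. Then every 6×2 integer matrix D with nonnegative entries, each row nonzero, satisfying D^T D = C, has rows that are a permutation of (1,0),(1,0),(1,1),(1,1),(0,1),(0,1). -/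
/-!
Every row of `D` is a nonzero vector of naturals, so its squared norm is at least `1`; the
squared norms of the six rows add up to `trace C = 8`, so each is at most `3`. Hence every row
is `(1,0)`, `(0,1)` or `(1,1)`, and their multiplicities `n₁₀, n₀₁, n₁₁` are read off the
entries of `C`: `n₁₀ + n₁₁ = 4`, `n₀₁ + n₁₁ = 4`, `n₁₁ = 2`.
-/

open Matrix Finset

theorem sum_comp_eq_sum_card_fiber_nsmul {ι α M : Type*} [Fintype ι] [DecidableEq α]
    [AddCommMonoid M] {S : Finset α} {f : ι → α} (hf : ∀ i, f i ∈ S) (φ : α → M) :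
    ∑ i, φ (f i) = ∑ a ∈ S, #{i | f i = a} • φ a := by
  rw [← sum_fiberwise_of_maps_to' (fun i _ => hf i)]
  simp only [sum_const]

theorem exists_perm_of_card_fiber_eq {ι α : Type*} [Fintype ι] [DecidableEq α] {S : Finset α}
    {f g : ι → α} (hf : ∀ i, f i ∈ S) (hg : ∀ i, g i ∈ S)
    (h : ∀ a ∈ S, #{i | f i = a} = #{i | g i = a}) :
    ∃ σ : Equiv.Perm ι, ∀ i, f (σ i) = g i := by
  have hcard (a : α) : Fintype.card {i // g i = a} = Fintype.card {i // f i = a} := by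
    simp only [Fintype.card_subtype]
    by_cases ha : a ∈ S
    · exact (h a ha).symm
    · rw [filter_false_of_mem fun i _ (hi : g i = a) => ha (hi ▸ hg i),
        filter_false_of_mem fun i _ (hi : f i = a) => ha (hi ▸ hf i)]
  exact ⟨Equiv.ofFiberEquiv fun a => Fintype.equivOfCardEq (hcard a),
    Equiv.ofFiberEquiv_map _⟩

theorem add_card_le_sum_add_one {ι : Type*} [Fintype ι] {f : ι → ℕ} (hf : ∀ i, 1 ≤ f i)
    (i : ι) : f i + Fintype.card ι ≤ ∑ j, f j + 1 := by
  classical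
  have hrest : #(univ.erase i) • 1 ≤ ∑ j ∈ univ.erase i, f j :=
    card_nsmul_le_sum _ _ _ fun j _ => hf j
  rw [← add_sum_erase univ f (mem_univ i)]
  rw [card_erase_of_mem (mem_univ i), card_univ, smul_eq_mul, mul_one] at hrest
  have := Fintype.card_pos_iff.mpr ⟨i⟩
  omega

def nonzeroBinaryRows : Finset (Fin 2 → ℕ) := {![1, 0], ![0, 1], ![1, 1]}

theorem mem_nonzeroBinaryRows {v : Fin 2 → ℕ} (hv : v ≠ 0) (h0 : v 0 ≤ 1) (h1 : v 1 ≤ 1) :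
    v ∈ nonzeroBinaryRows := by
  have hv_eq : v = ![v 0, v 1] := by ext j; fin_cases j <;> rfl
  rw [hv_eq] at hv ⊢
  interval_cases (v 0) <;> interval_cases (v 1) <;> simp_all [nonzeroBinaryRows]

theorem mul_self_le_dotProduct_self {n : Type*} [Fintype n] (v : n → ℕ) (j : n) :
    v j * v j ≤ v ⬝ᵥ v :=
  single_le_sum (f := fun j => v j * v j) (fun _ _ => Nat.zero_le _) (mem_univ j)

theorem one_le_dotProduct_self {n : Type*} [Fintype n] {v : n → ℕ} (hv : v ≠ 0) :
    1 ≤ v ⬝ᵥ v := by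
  obtain ⟨j, hj⟩ := Function.ne_iff.mp hv
  have := mul_self_le_dotProduct_self v j
  have : 0 < v j * v j := Nat.mul_pos (Nat.pos_of_ne_zero hj) (Nat.pos_of_ne_zero hj)
  omega

theorem sum_dotProduct_self_eq_trace {m n : Type*} [Fintype m] [Fintype n]
    (D : Matrix m n ℕ) : ∑ i, D i ⬝ᵥ D i = trace (Dᵀ * D) := by
  rw [trace_mul_comm]; rfl

theorem sum_nonzeroBinaryRows {M : Type*} [AddCommMonoid M] (f : (Fin 2 → ℕ) → M) :
    ∑ v ∈ nonzeroBinaryRows, f v = f ![1, 0] + (f ![0, 1] + f ![1, 1]) := by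
  rw [nonzeroBinaryRows, sum_insert (by decide), sum_insert (by decide), sum_singleton]

theorem card_fiber_eq_two {ι : Type*} [Fintype ι] {r : ι → Fin 2 → ℕ}
    (hr : ∀ i, r i ∈ nonzeroBinaryRows)
    (hgram : ∀ j k, ∑ i, r i j * r i k = !![4, 2; 2, 4] j k) :
    ∀ v ∈ nonzeroBinaryRows, #{i | r i = v} = 2 := by
  have hcount (j k : Fin 2) := (hgram j k).symm.trans
    (sum_comp_eq_sum_card_fiber_nsmul hr fun v => v j * v k)
  have h00 := hcount 0 0
  have h11 := hcount 1 1
  have h01 := hcount 0 1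
  simp only [of_apply, cons_val', cons_val_zero, cons_val_one, cons_val_fin_one, smul_eq_mul,
    sum_nonzeroBinaryRows, mul_one, mul_zero, zero_add] at h00 h11 h01
  simp only [nonzeroBinaryRows, mem_insert, mem_singleton, forall_eq_or_imp, forall_eq]
  omega

/-- The decomposition matrix of `A(2,2,2)`: every `6 × 2` matrix `D` with
natural-number entries, each row nonzero, satisfying `Dᵀ * D = C` for the Cartan matrix
`C = !![4,2;2,4]`, has rows that are a permutation of `(1,0),(1,0),(1,1),(1,1),(0,1),(0,1)`. -/
theorem decomposition_matrix_A222
    (D : Matrix (Fin 6) (Fin 2) ℕ)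
    (hrow : ∀ i, (fun j => D i j) ≠ 0)
    (hC : Dᵀ * D = !![4, 2; 2, 4]) :
    ∃ σ : Equiv.Perm (Fin 6),
      ∀ i, (fun j => D (σ i) j) =
        ![![1, 0], ![1, 0], ![1, 1], ![1, 1], ![0, 1], ![0, 1]] i := by
  have hgram (j k : Fin 2) : ∑ i, D i j * D i k = !![4, 2; 2, 4] j k := by
    rw [← hC]; rfl
  have hrow_ne (i : Fin 6) : D i ≠ 0 := hrow i
  have hnorm_le (i : Fin 6) : D i ⬝ᵥ D i ≤ 3 := by
    have := add_card_le_sum_add_one (fun i => one_le_dotProduct_self (hrow_ne i)) i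
    have htrace : trace !![4, 2; 2, 4] = 8 := rfl
    rw [sum_dotProduct_self_eq_trace, hC, htrace, Fintype.card_fin] at this
    omega
  have hentry_le (i : Fin 6) (j : Fin 2) : D i j ≤ 1 := by
    have := (mul_self_le_dotProduct_self (D i) j).trans (hnorm_le i)
    nlinarith
  have hmem (i : Fin 6) : D i ∈ nonzeroBinaryRows :=
    mem_nonzeroBinaryRows (hrow_ne i) (hentry_le i 0) (hentry_le i 1)
  refine exists_perm_of_card_fiber_eq hmem (by decide) fun v hv => ?_
  rw [card_fiber_eq_two hmem hgram v hv]
  revert v; decide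
end

section
/- In the algebra A = A(2,2,2) with presentation as above, the endomorphism ring of the projective P₁ is 4-dimensional with basis {e₁, μν, α, α²}, and Hom_A(P₁,P₂) is 2-dimensional with basis given by left multiplication by ν and by νμν. -/
noncomputable section

open FreeAlgebra

/-- Generators of the Brauer graph algebra `A(2,2,2)`: the vertex idempotents
`e₁, e₂` (indices 0, 1), the loops `α, β` (indices 2, 3) at the vertices 1, 2, and
the arrows `μ : 1 → 2`, `ν : 2 → 1` (indices 4, 5). -/
abbrev A222Gen := Fin 6

/-- The relations presenting the Brauer graph algebra `A(2,2,2)` as a bounded quiver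
algebra: `e₁, e₂` are orthogonal idempotents summing to `1`, the arrows `α, β, μ, ν`
have the indicated sources and targets, and
`αμ = μβ = βν = να = 0`, `α² = (μν)²`, `β² = (νμ)²`. -/
inductive a222Rel (K : Type) [Field K] :
    FreeAlgebra K A222Gen → FreeAlgebra K A222Gen → Prop
  | sum : a222Rel K (ι K 0 + ι K 1) 1
  | orth12 : a222Rel K (ι K 0 * ι K 1) 0
  | orth21 : a222Rel K (ι K 1 * ι K 0) 0
  | idem1 : a222Rel K (ι K 0 * ι K 0) (ι K 0)
  | idem2 : a222Rel K (ι K 1 * ι K 1) (ι K 1)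
  | alpha_src : a222Rel K (ι K 0 * ι K 2) (ι K 2)
  | alpha_tgt : a222Rel K (ι K 2 * ι K 0) (ι K 2)
  | beta_src : a222Rel K (ι K 1 * ι K 3) (ι K 3)
  | beta_tgt : a222Rel K (ι K 3 * ι K 1) (ι K 3)
  | mu_src : a222Rel K (ι K 0 * ι K 4) (ι K 4)
  | mu_tgt : a222Rel K (ι K 4 * ι K 1) (ι K 4)
  | nu_src : a222Rel K (ι K 1 * ι K 5) (ι K 5)
  | nu_tgt : a222Rel K (ι K 5 * ι K 0) (ι K 5)
  | alpha_mu : a222Rel K (ι K 2 * ι K 4) 0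
  | mu_beta : a222Rel K (ι K 4 * ι K 3) 0
  | beta_nu : a222Rel K (ι K 3 * ι K 5) 0
  | nu_alpha : a222Rel K (ι K 5 * ι K 2) 0
  | alpha_sq : a222Rel K (ι K 2 ^ 2) ((ι K 4 * ι K 5) ^ 2)
  | beta_sq : a222Rel K (ι K 3 ^ 2) ((ι K 5 * ι K 4) ^ 2)

/-- The Brauer graph algebra `A(2,2,2)`. -/
abbrev A222 (K : Type) [Field K] : Type := RingQuot (a222Rel K)

variable (K : Type) [Field K]

/-- The images of the generators in `A(2,2,2)`. -/
def g (i : A222Gen) : A222 K := RingQuot.mkAlgHom K (a222Rel K) (ι K i)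

/-- The indecomposable projective right `A(2,2,2)`-module `P₁ = e₁A`, as a submodule of
the right regular module (a module over the opposite algebra). -/
def P1 : Submodule (A222 K)ᵐᵒᵖ (A222 K) := Submodule.span _ {g K 0}

/-- The indecomposable projective right `A(2,2,2)`-module `P₂ = e₂A`. -/
def P2 : Submodule (A222 K)ᵐᵒᵖ (A222 K) := Submodule.span _ {g K 1}

noncomputable instance (M N : Submodule (A222 K)ᵐᵒᵖ (A222 K)) :
    AddCommGroup (M →ₗ[(A222 K)ᵐᵒᵖ] N) :=
  @LinearMap.addCommGroup (A222 K)ᵐᵒᵖ (A222 K)ᵐᵒᵖ M N _ _ _ _ _ _ _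

noncomputable instance (M N : Submodule (A222 K)ᵐᵒᵖ (A222 K)) :
    Module K (M →ₗ[(A222 K)ᵐᵒᵖ] N) :=
  @LinearMap.module (A222 K)ᵐᵒᵖ (A222 K)ᵐᵒᵖ K M N _ _ _ _ _ _ _ _ _ _

/-! For idempotents `e, f` of a ring `A`, evaluation at `e` identifies `Hom_A(eA, fA)` with the
corner `fAe`, the inverse sending `c` to left multiplication by `c`; so it suffices to find bases
of `e₁Ae₁` and `e₂Ae₁`. The six paths `e₁, α, μν, α², ν, νμν` ending at vertex 1 span `Ae₁`,
because left multiplication by a generator sends each of them to one of them or to zero. They are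
linearly independent: the matrices of these left multiplications satisfy the defining relations,
so they define a representation `A → M₆(K)`, in which the paths act on the first basis vector
by sending it to the six different basis vectors. Multiplying on the left by `e₁` keeps
`e₁, μν, α, α²` and kills `ν, νμν`; multiplying by `e₂` keeps `ν, νμν` and kills the rest. -/

theorem mul_eq_zero_of_mul_eq_of_eq_mul {M₀ : Type*} [SemigroupWithZero M₀] {a b p q : M₀}
    (ha : a * p = a) (hb : q * b = b) (hpq : p * q = 0) : a * b = 0 := by
  rw [← ha, ← hb, mul_assoc, ← mul_assoc p, hpq, zero_mul, mul_zero]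

section Corner

open Submodule

variable {k R : Type*} [CommSemiring k] [Semiring R] [Algebra k R]

theorem mul_mem_span_of_adjoin_eq_top {ι : Type*} {s : Set R} (hs : Algebra.adjoin k s = ⊤)
    {v : ι → R} (hv : ∀ a ∈ s, ∀ j, a * v j ∈ span k (Set.range v)) (r : R) {w : R}
    (hw : w ∈ span k (Set.range v)) : r * w ∈ span k (Set.range v) := by
  have hs' : ∀ a ∈ s,
      span k (Set.range v) ≤ (span k (Set.range v)).comap (LinearMap.mulLeft k a) := fun a ha ↦ span_le.2 (Set.range_subset_iff.2 (hv a ha))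
  induction (hs ▸ Algebra.mem_top : r ∈ Algebra.adjoin k s) using Algebra.adjoin_induction
    generalizing w with
  | mem a ha => exact hs' a ha hw
  | algebraMap c => rw [← Algebra.smul_def]; exact smul_mem _ c hw
  | add x y _ _ hx hy => rw [add_mul]; exact add_mem (hx hw) (hy hw)
  | mul x y _ _ hx hy => rw [mul_assoc]; exact hx (hy hw)

theorem mem_span_op_singleton {e x : R} : x ∈ span Rᵐᵒᵖ {e} ↔ ∃ a, e * a = x := by
  simp [mem_span_singleton]

variable (k) in
def corner (f e : R) : Submodule k R where
  carrier := {c | f * c = c ∧ c * e = c}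
  add_mem' {a b} ha hb := ⟨by rw [mul_add, ha.1, hb.1], by rw [add_mul, ha.2, hb.2]⟩
  zero_mem' := ⟨mul_zero f, zero_mul e⟩
  smul_mem' r c hc := ⟨by rw [mul_smul_comm, hc.1], by rw [smul_mul_assoc, hc.2]⟩

def mulLeftToSpan (M : Submodule Rᵐᵒᵖ R) {f c : R} (hc : f * c = c) :
    M →ₗ[Rᵐᵒᵖ] span Rᵐᵒᵖ {f} where
  toFun x := ⟨c * x, mem_span_op_singleton.2 ⟨c * x, by rw [← mul_assoc, hc]⟩⟩
  map_add' x y := Subtype.ext (mul_add c x y)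
  map_smul' a x := Subtype.ext (mul_assoc c x a.unop).symm

@[simp]
theorem mulLeftToSpan_apply (M : Submodule Rᵐᵒᵖ R) {f c : R} (hc : f * c = c) (x : M) :
    (mulLeftToSpan M hc x : R) = c * x := rfl

theorem coe_apply_mul_eq_mul {M : Submodule Rᵐᵒᵖ R} {e : R} (φ : span Rᵐᵒᵖ {e} →ₗ[Rᵐᵒᵖ] M)
    (a : R) (h : e * a ∈ span Rᵐᵒᵖ {e}) :
    (φ ⟨e * a, h⟩ : R) = φ ⟨e, mem_span_singleton_self e⟩ * a :=
  congrArg Subtype.val (φ.map_smul (MulOpposite.op a) ⟨e, mem_span_singleton_self e⟩)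

theorem coe_apply_mul_self {M : Submodule Rᵐᵒᵖ R} {e : R} (he : IsIdempotentElem e)
    (φ : span Rᵐᵒᵖ {e} →ₗ[Rᵐᵒᵖ] M) :
    (φ ⟨e, mem_span_singleton_self e⟩ : R) * e = φ ⟨e, mem_span_singleton_self e⟩ := by
  rw [← coe_apply_mul_eq_mul φ e (mem_span_op_singleton.2 ⟨e, rfl⟩)]
  exact congrArg (fun x ↦ (φ x : R)) (Subtype.ext he.eq)

variable (k) in
def homSpanEquivCorner {e f : R} (he : IsIdempotentElem e) (hf : IsIdempotentElem f) :
    (span Rᵐᵒᵖ {e} →ₗ[Rᵐᵒᵖ] span Rᵐᵒᵖ {f}) ≃ₗ[k] corner k f e where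
  toFun φ := ⟨φ ⟨e, mem_span_singleton_self e⟩, by
    obtain ⟨a, ha⟩ := mem_span_op_singleton.1 (φ ⟨e, mem_span_singleton_self e⟩).2
    exact ⟨by rw [← ha, ← mul_assoc, hf.eq], coe_apply_mul_self he φ⟩⟩
  map_add' φ ψ := rfl
  map_smul' r φ := rfl
  invFun c := mulLeftToSpan _ c.2.1
  left_inv φ := by
    ext ⟨x, hx⟩
    obtain ⟨a, rfl⟩ := mem_span_op_singleton.1 hx
    simp only [mulLeftToSpan_apply, coe_apply_mul_eq_mul φ a hx]
    rw [← mul_assoc, coe_apply_mul_self he φ]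
  right_inv c := Subtype.ext c.2.2

theorem exists_basis_hom_span_of_span_eq_corner {ι : Type*} {e f : R}
    (he : IsIdempotentElem e) (hf : IsIdempotentElem f) {v : ι → R}
    (hli : LinearIndependent k v) (hspan : span k (Set.range v) = corner k f e) :
    ∃ b : Module.Basis ι k (span Rᵐᵒᵖ {e} →ₗ[Rᵐᵒᵖ] span Rᵐᵒᵖ {f}),
      ∀ i x, (b i x : R) = v i * x :=
  ⟨((Module.Basis.span hli).map (LinearEquiv.ofEq _ _ hspan)).map
    (homSpanEquivCorner k he hf).symm, fun i x ↦ by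
    simp [homSpanEquivCorner, Module.Basis.span_apply]⟩

theorem corner_le_span {ι ι' : Type*} {f e : R} {v : ι → R} {w : ι' → R}
    (hv : ∀ x : R, x * e ∈ span k (Set.range v)) (hw : ∀ j, f * v j ∈ span k (Set.range w)) :
    corner k f e ≤ span k (Set.range w) := by
  rintro c ⟨hfc, hce⟩
  have hf : span k (Set.range v) ≤ (span k (Set.range w)).comap (LinearMap.mulLeft k f) :=
    span_le.2 (Set.range_subset_iff.2 hw)
  have hc : f * (c * e) = c := by rw [hce, hfc]
  exact hc ▸ hf (hv c)

end Corner

namespace A222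

variable {K}

local notation "e₁" => g K 0
local notation "e₂" => g K 1
local notation "α" => g K 2
local notation "β" => g K 3
local notation "μ" => g K 4
local notation "ν" => g K 5

variable (K) in
theorem mkAlgHom_eq_of_rel {x y : FreeAlgebra K A222Gen} (h : a222Rel K x y) :
    RingQuot.mkAlgHom K (a222Rel K) x = RingQuot.mkAlgHom K (a222Rel K) y :=
  RingQuot.mkAlgHom_rel K h

@[simp] theorem e₁_mul_e₁ : e₁ * e₁ = e₁ := by simpa [g] using mkAlgHom_eq_of_rel K .idem1
@[simp] theorem e₂_mul_e₂ : e₂ * e₂ = e₂ := by simpa [g] using mkAlgHom_eq_of_rel K .idem2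
@[simp] theorem e₁_mul_e₂ : e₁ * e₂ = 0 := by simpa [g] using mkAlgHom_eq_of_rel K .orth12
@[simp] theorem e₂_mul_e₁ : e₂ * e₁ = 0 := by simpa [g] using mkAlgHom_eq_of_rel K .orth21
@[simp] theorem e₁_mul_α : e₁ * α = α := by simpa [g] using mkAlgHom_eq_of_rel K .alpha_src
@[simp] theorem α_mul_e₁ : α * e₁ = α := by simpa [g] using mkAlgHom_eq_of_rel K .alpha_tgt
@[simp] theorem β_mul_e₂ : β * e₂ = β := by simpa [g] using mkAlgHom_eq_of_rel K .beta_tgt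
@[simp] theorem e₁_mul_μ : e₁ * μ = μ := by simpa [g] using mkAlgHom_eq_of_rel K .mu_src
@[simp] theorem μ_mul_e₂ : μ * e₂ = μ := by simpa [g] using mkAlgHom_eq_of_rel K .mu_tgt
@[simp] theorem e₂_mul_ν : e₂ * ν = ν := by simpa [g] using mkAlgHom_eq_of_rel K .nu_src
@[simp] theorem ν_mul_e₁ : ν * e₁ = ν := by simpa [g] using mkAlgHom_eq_of_rel K .nu_tgt
@[simp] theorem α_mul_μ : α * μ = 0 := by simpa [g] using mkAlgHom_eq_of_rel K .alpha_mu
@[simp] theorem β_mul_ν : β * ν = 0 := by simpa [g] using mkAlgHom_eq_of_rel K .beta_nu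
@[simp] theorem ν_mul_α : ν * α = 0 := by simpa [g] using mkAlgHom_eq_of_rel K .nu_alpha

-- The simp normal form of a path is a left-associated word in which `(μν)²` is written as `αα`.
@[simp] theorem μ_mul_ν_mul_μ_mul_ν : μ * ν * μ * ν = α * α := by
  simpa [g, sq, mul_assoc, eq_comm] using mkAlgHom_eq_of_rel K .alpha_sq

@[simp] theorem e₁_mul_ν : e₁ * ν = 0 :=
  mul_eq_zero_of_mul_eq_of_eq_mul e₁_mul_e₁ e₂_mul_ν e₁_mul_e₂
@[simp] theorem e₂_mul_α : e₂ * α = 0 :=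
  mul_eq_zero_of_mul_eq_of_eq_mul e₂_mul_e₂ e₁_mul_α e₂_mul_e₁
@[simp] theorem e₂_mul_μ : e₂ * μ = 0 :=
  mul_eq_zero_of_mul_eq_of_eq_mul e₂_mul_e₂ e₁_mul_μ e₂_mul_e₁
@[simp] theorem α_mul_ν : α * ν = 0 :=
  mul_eq_zero_of_mul_eq_of_eq_mul α_mul_e₁ e₂_mul_ν e₁_mul_e₂
@[simp] theorem β_mul_e₁ : β * e₁ = 0 :=
  mul_eq_zero_of_mul_eq_of_eq_mul β_mul_e₂ e₁_mul_e₁ e₂_mul_e₁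
@[simp] theorem β_mul_α : β * α = 0 :=
  mul_eq_zero_of_mul_eq_of_eq_mul β_mul_e₂ e₁_mul_α e₂_mul_e₁
@[simp] theorem β_mul_μ : β * μ = 0 :=
  mul_eq_zero_of_mul_eq_of_eq_mul β_mul_e₂ e₁_mul_μ e₂_mul_e₁
@[simp] theorem μ_mul_e₁ : μ * e₁ = 0 :=
  mul_eq_zero_of_mul_eq_of_eq_mul μ_mul_e₂ e₁_mul_e₁ e₂_mul_e₁
@[simp] theorem μ_mul_α : μ * α = 0 :=
  mul_eq_zero_of_mul_eq_of_eq_mul μ_mul_e₂ e₁_mul_α e₂_mul_e₁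
@[simp] theorem μ_mul_μ : μ * μ = 0 :=
  mul_eq_zero_of_mul_eq_of_eq_mul μ_mul_e₂ e₁_mul_μ e₂_mul_e₁
@[simp] theorem ν_mul_ν : ν * ν = 0 :=
  mul_eq_zero_of_mul_eq_of_eq_mul ν_mul_e₁ e₂_mul_ν e₁_mul_e₂

@[simp] theorem α_mul_α_mul_α : α * α * α = 0 := by
  rw [← μ_mul_ν_mul_μ_mul_ν, mul_assoc, ν_mul_α, mul_zero]

theorem isIdempotentElem_e₁ : IsIdempotentElem e₁ := e₁_mul_e₁
theorem isIdempotentElem_e₂ : IsIdempotentElem e₂ := e₂_mul_e₂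

variable (K) in
def pathsTo₁ : Fin 6 → A222 K := ![e₁, α, μ * ν, α ^ 2, ν, ν * μ * ν]

variable (K) in
open Matrix in
def genMatrix : A222Gen → Matrix (Fin 6) (Fin 6) K
  | 0 => single 0 0 1 + single 1 1 1 + single 2 2 1 + single 3 3 1
  | 1 => single 4 4 1 + single 5 5 1
  | 2 => single 1 0 1 + single 3 1 1
  | 3 => 0
  | 4 => single 2 4 1 + single 3 5 1
  | 5 => single 4 0 1 + single 5 2 1

theorem g_mul_pathsTo₁ (i : A222Gen) (j : Fin 6) :
    g K i * pathsTo₁ K j = ∑ l, genMatrix K i l j • pathsTo₁ K l := by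
  fin_cases i <;> fin_cases j <;>
    simp [genMatrix, pathsTo₁, Matrix.single_apply, sq, ← mul_assoc]

theorem genMatrix_rel ⦃x y : FreeAlgebra K A222Gen⦄ (h : a222Rel K x y) :
    FreeAlgebra.lift K (genMatrix K) x = FreeAlgebra.lift K (genMatrix K) y := by
  induction h
  case sum =>
    simp only [map_add, map_one, FreeAlgebra.lift_ι_apply, genMatrix]
    rw [← Matrix.sum_single_one, Fin.sum_univ_six]
    abel
  all_goals simp [genMatrix, sq, add_mul, mul_add]

variable (K) in
def matrixRep : A222 K →ₐ[K] Matrix (Fin 6) (Fin 6) K :=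
  RingQuot.liftAlgHom K ⟨FreeAlgebra.lift K (genMatrix K), genMatrix_rel⟩

theorem matrixRep_g (i : A222Gen) : matrixRep K (g K i) = genMatrix K i := by
  simp [matrixRep, g]

theorem matrixRep_pathsTo₁_mul_single (j : Fin 6) :
    matrixRep K (pathsTo₁ K j) * Matrix.single 0 0 1 = Matrix.single j 0 1 := by
  fin_cases j <;> simp [pathsTo₁, matrixRep_g, genMatrix, sq, add_mul, mul_add]

theorem linearIndependent_pathsTo₁ : LinearIndependent K (pathsTo₁ K) := by
  refine LinearIndependent.of_comp
    (LinearMap.mulRight K (Matrix.single 0 0 1) ∘ₗ (matrixRep K).toLinearMap) ?_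
  have h : (LinearMap.mulRight K (Matrix.single 0 0 1) ∘ₗ (matrixRep K).toLinearMap) ∘
      pathsTo₁ K = Matrix.stdBasis K (Fin 6) (Fin 6) ∘ fun j ↦ (j, 0) := by
    ext1 j
    simp [matrixRep_pathsTo₁_mul_single, Matrix.stdBasis_eq_single]
  rw [h]
  exact (Matrix.stdBasis K _ _).linearIndependent.comp _ fun _ _ ↦ congrArg Prod.fst

theorem adjoin_range_g : Algebra.adjoin K (Set.range (g K)) = ⊤ := by
  rw [show Set.range (g K) = RingQuot.mkAlgHom K (a222Rel K) '' Set.range (ι K) by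
      rw [← Set.range_comp]; rfl, Algebra.adjoin_image, FreeAlgebra.adjoin_range_ι,
    Algebra.map_top, AlgHom.range_eq_top]
  exact RingQuot.mkAlgHom_surjective K (a222Rel K)

theorem mul_e₁_mem_span_pathsTo₁ (x : A222 K) :
    x * e₁ ∈ Submodule.span K (Set.range (pathsTo₁ K)) := by
  refine mul_mem_span_of_adjoin_eq_top adjoin_range_g ?_ x (Submodule.subset_span ⟨0, rfl⟩)
  rintro _ ⟨i, rfl⟩ j
  rw [g_mul_pathsTo₁]
  exact sum_mem fun l _ ↦ Submodule.smul_mem _ _ (Submodule.subset_span ⟨l, rfl⟩)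

variable (K) in
def endBasis : Fin 4 → A222 K := ![e₁, μ * ν, α, α ^ 2]

variable (K) in
def homBasis : Fin 2 → A222 K := ![ν, ν * μ * ν]

theorem e₁_mul_pathsTo₁_mem (j : Fin 6) :
    e₁ * pathsTo₁ K j ∈ Submodule.span K (Set.range (endBasis K)) := by
  fin_cases j <;> simp [pathsTo₁, endBasis, sq, ← mul_assoc] <;>
    exact Submodule.subset_span (by simp)

theorem e₂_mul_pathsTo₁_mem (j : Fin 6) :
    e₂ * pathsTo₁ K j ∈ Submodule.span K (Set.range (homBasis K)) := by
  fin_cases j <;> simp [pathsTo₁, homBasis, sq, ← mul_assoc] <;>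
    exact Submodule.subset_span (by simp)

theorem span_endBasis : Submodule.span K (Set.range (endBasis K)) = corner K e₁ e₁ := by
  refine le_antisymm (Submodule.span_le.2 (Set.range_subset_iff.2 fun i ↦ ?_))
    (corner_le_span mul_e₁_mem_span_pathsTo₁ e₁_mul_pathsTo₁_mem)
  fin_cases i <;> exact ⟨by simp [endBasis, sq, ← mul_assoc], by simp [endBasis, sq, mul_assoc]⟩

theorem span_homBasis : Submodule.span K (Set.range (homBasis K)) = corner K e₂ e₁ := by
  refine le_antisymm (Submodule.span_le.2 (Set.range_subset_iff.2 fun i ↦ ?_))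
    (corner_le_span mul_e₁_mem_span_pathsTo₁ e₂_mul_pathsTo₁_mem)
  fin_cases i <;> exact ⟨by simp [homBasis, ← mul_assoc], by simp [homBasis, mul_assoc]⟩

theorem linearIndependent_endBasis : LinearIndependent K (endBasis K) := by
  have h : endBasis K = pathsTo₁ K ∘ ![0, 2, 1, 3] := by
    ext i; fin_cases i <;> rfl
  rw [h]
  exact linearIndependent_pathsTo₁.comp _ (by decide)

theorem linearIndependent_homBasis : LinearIndependent K (homBasis K) := by
  have h : homBasis K = pathsTo₁ K ∘ ![4, 5] := by
    ext i; fin_cases i <;> rfl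
  rw [h]
  exact linearIndependent_pathsTo₁.comp _ (by decide)

variable (K) in
theorem exists_basis_end_P1 : ∃ b : Module.Basis (Fin 4) K (P1 K →ₗ[(A222 K)ᵐᵒᵖ] P1 K),
    ∀ i x, (b i x : A222 K) = endBasis K i * x :=
  exists_basis_hom_span_of_span_eq_corner isIdempotentElem_e₁ isIdempotentElem_e₁
    linearIndependent_endBasis span_endBasis

variable (K) in
theorem exists_basis_hom_P1_P2 : ∃ b : Module.Basis (Fin 2) K (P1 K →ₗ[(A222 K)ᵐᵒᵖ] P2 K),
    ∀ i x, (b i x : A222 K) = homBasis K i * x :=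
  exists_basis_hom_span_of_span_eq_corner isIdempotentElem_e₁ isIdempotentElem_e₂
    linearIndependent_homBasis span_homBasis

end A222

/-- In `A = A(2,2,2)`, the endomorphism ring of the projective right module `P₁` is
`4`-dimensional over `K`, with basis given by left multiplication by
`e₁, μν, α, α²`, and `Hom_A(P₁, P₂)` is `2`-dimensional, with basis given by left
multiplication by `ν` and by `νμν`. -/
theorem A222_End_P1_and_Hom_P1_P2 :
    Module.finrank K (P1 K →ₗ[(A222 K)ᵐᵒᵖ] P1 K) = 4 ∧
    (∃ b : Module.Basis (Fin 4) K (P1 K →ₗ[(A222 K)ᵐᵒᵖ] P1 K),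
      ∀ i x, ((b i x : A222 K)) =
        ![g K 0, g K 4 * g K 5, g K 2, g K 2 ^ 2] i * (x : A222 K)) ∧
    Module.finrank K (P1 K →ₗ[(A222 K)ᵐᵒᵖ] P2 K) = 2 ∧
    (∃ b : Module.Basis (Fin 2) K (P1 K →ₗ[(A222 K)ᵐᵒᵖ] P2 K),
      ∀ i x, ((b i x : A222 K)) =
        ![g K 5, g K 5 * g K 4 * g K 5] i * (x : A222 K)) := by
  obtain ⟨bEnd, hbEnd⟩ := A222.exists_basis_end_P1 K
  obtain ⟨bHom, hbHom⟩ := A222.exists_basis_hom_P1_P2 K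
  exact ⟨(Module.finrank_eq_card_basis bEnd).trans (Fintype.card_fin 4), ⟨bEnd, hbEnd⟩,
    (Module.finrank_eq_card_basis bHom).trans (Fintype.card_fin 2), ⟨bHom, hbHom⟩⟩

end
end

section
/- In the Hecke algebra H_n(q,1) of type B with Q = 1, the assignments σ(T₀) = -T₀, σ(T_i) = T_i for i ≥ 1, and τ(T₁) = T₀T₁T₀, τ(T_i) = T_i for i ≠ 1, extend to algebra automorphisms σ and τ of H_n(q,1), and these automorphisms commute: στ = τσ. -/
noncomputable section

open FreeAlgebra

/-- The defining relations of the Hecke algebra `H_n(q, 1)` of type `B` with parameter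
`Q = 1`, on generators `T₀, …, T_{n-1}`:
`T₀² = 1`, `(Tᵢ - q)(Tᵢ + 1) = 0` for `1 ≤ i ≤ n-1`, `(T₀T₁)² = (T₁T₀)²`,
`TᵢTⱼ = TⱼTᵢ` for `j ≥ i + 2`, and `TᵢTᵢ₊₁Tᵢ = Tᵢ₊₁TᵢTᵢ₊₁` for `1 ≤ i ≤ n-2`. -/
inductive heckeBRel (K : Type) [Field K] (n : ℕ) (q : K) :
    FreeAlgebra K (Fin n) → FreeAlgebra K (Fin n) → Prop
  | quad0 (h : 0 < n) : heckeBRel K n q (ι K ⟨0, h⟩ * ι K ⟨0, h⟩) 1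
  | quad (i : Fin n) (h : 1 ≤ i.val) :
      heckeBRel K n q
        ((ι K i - algebraMap K (FreeAlgebra K (Fin n)) q) * (ι K i + 1)) 0
  | braid01 (h : 1 < n) :
      heckeBRel K n q ((ι K ⟨0, by omega⟩ * ι K ⟨1, h⟩) ^ 2)
        ((ι K ⟨1, h⟩ * ι K ⟨0, by omega⟩) ^ 2)
  | comm (i j : Fin n) (h : i.val + 2 ≤ j.val) :
      heckeBRel K n q (ι K i * ι K j) (ι K j * ι K i)
  | braid (i j : Fin n) (hi : 1 ≤ i.val) (hj : j.val = i.val + 1) :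
      heckeBRel K n q (ι K i * ι K j * ι K i) (ι K j * ι K i * ι K j)

/-- The Hecke algebra `H_n(q, 1)` of type `B` with `Q = 1`. -/
abbrev HeckeB (K : Type) [Field K] (n : ℕ) (q : K) : Type := RingQuot (heckeBRel K n q)

variable (K : Type) [Field K] (n : ℕ) (q : K)

/-- The images `T i` of the generators in `H_n(q, 1)`. -/
def T (i : Fin n) : HeckeB K n q := RingQuot.mkAlgHom K (heckeBRel K n q) (ι K i)


/-!
`τ` is conjugation by the involution `T₀`: it fixes `T₀` and every `Tᵢ` with `i ≥ 2`, since
these commute with `T₀`. `σ` is well defined because each defining relation is either even in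
`T₀` or a commutation relation, and it is an involution. Finally `σ` and `τ` commute because
conjugation by `σ(T₀) = -T₀` is conjugation by `T₀`.
-/

namespace HeckeB

section Families

variable {K n q} {A : Type} [Semiring A] [Algebra K A]

variable (K q) in
def IsHeckeBFamily (t : Fin n → A) : Prop :=
  ∀ ⦃a b⦄, heckeBRel K n q a b → FreeAlgebra.lift K t a = FreeAlgebra.lift K t b

def lift (t : Fin n → A) (ht : IsHeckeBFamily K q t) : HeckeB K n q →ₐ[K] A :=
  RingQuot.liftAlgHom K ⟨FreeAlgebra.lift K t, ht⟩

@[simp]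
theorem lift_T (t : Fin n → A) (ht : IsHeckeBFamily K q t) (i : Fin n) :
    lift t ht (T K n q i) = t i :=
  (RingQuot.liftAlgHom_mkAlgHom_apply K _ _ _).trans (FreeAlgebra.lift_ι_apply _ _)

theorem algHom_ext {f g : HeckeB K n q →ₐ[K] A} (h : ∀ i, f (T K n q i) = g (T K n q i)) :
    f = g :=
  RingQuot.ringQuot_ext' K f g (FreeAlgebra.hom_ext (funext h))

theorem isHeckeBFamily_T : IsHeckeBFamily K q (T K n q) := fun a b h => by
  rw [← (FreeAlgebra.lift_unique (T K n q) _).mp rfl]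
  exact RingQuot.mkAlgHom_rel K h

end Families

section NegZero

variable {K n q} {A : Type} [Ring A] [Algebra K A]

def negZero (t : Fin n → A) (i : Fin n) : A :=
  if i.val = 0 then -t i else t i

theorem IsHeckeBFamily.negZero {t : Fin n → A} (ht : IsHeckeBFamily K q t) :
    IsHeckeBFamily K q (negZero t) := by
  intro a b h
  have := ht h
  induction h with
  | quad0 h => simpa [HeckeB.negZero] using this
  | quad i hi => simpa [HeckeB.negZero, show i.val ≠ 0 by omega] using this
  | braid01 h => simpa [HeckeB.negZero] using this
  | comm i j h =>
    by_cases hi : i.val = 0 <;> simpa [HeckeB.negZero, hi, show j.val ≠ 0 by omega] using this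
  | braid i j hi hj =>
    simpa [HeckeB.negZero, show i.val ≠ 0 by omega, show j.val ≠ 0 by omega] using this

end NegZero

section Automorphisms

variable {n}

theorem T_zero_mul_self (h : 0 < n) : T K n q ⟨0, h⟩ * T K n q ⟨0, h⟩ = 1 := by
  simpa [T] using RingQuot.mkAlgHom_rel K (heckeBRel.quad0 (K := K) (q := q) h)

theorem T_commute (i j : Fin n) (h : i.val + 2 ≤ j.val) : Commute (T K n q i) (T K n q j) := by
  show _ * _ = _ * _
  simpa [T] using RingQuot.mkAlgHom_rel K (heckeBRel.comm (K := K) (q := q) i j h)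

variable (n)

def tau (h : 0 < n) : HeckeB K n q ≃ₐ[K] HeckeB K n q :=
  MulSemiringAction.toAlgEquiv K _ <| ConjAct.toConjAct <| show (HeckeB K n q)ˣ from
    ⟨T K n q ⟨0, h⟩, T K n q ⟨0, h⟩, T_zero_mul_self K q h, T_zero_mul_self K q h⟩

def sigma : HeckeB K n q →ₐ[K] HeckeB K n q :=
  lift (negZero (T K n q)) isHeckeBFamily_T.negZero

variable {K n q}

theorem tau_apply (h : 0 < n) (x : HeckeB K n q) :
    tau K n q h x = T K n q ⟨0, h⟩ * x * T K n q ⟨0, h⟩ :=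
  rfl

theorem tau_T_of_ne_one (h : 0 < n) (i : Fin n) (hi : i.val ≠ 1) :
    tau K n q h (T K n q i) = T K n q i := by
  rw [tau_apply]
  rcases Nat.eq_zero_or_pos i.val with hi0 | hi0
  · obtain rfl : i = ⟨0, h⟩ := Fin.ext hi0
    rw [T_zero_mul_self, one_mul]
  · have hc : Commute (T K n q ⟨0, h⟩) (T K n q i) := T_commute K q _ i (by simp only; omega)
    rw [mul_assoc, ← hc.eq, ← mul_assoc, T_zero_mul_self, one_mul]

theorem sigma_T_of_eq_zero (i : Fin n) (hi : i.val = 0) :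
    sigma K n q (T K n q i) = -T K n q i := by
  simp [sigma, negZero, hi]

theorem sigma_T_of_ne_zero (i : Fin n) (hi : i.val ≠ 0) :
    sigma K n q (T K n q i) = T K n q i := by
  simp [sigma, negZero, hi]

theorem sigma_comp_sigma : (sigma K n q).comp (sigma K n q) = AlgHom.id K (HeckeB K n q) :=
  algHom_ext fun i => by
    by_cases hi : i.val = 0
    · simp [sigma_T_of_eq_zero i hi]
    · simp [sigma_T_of_ne_zero i hi]

theorem sigma_tau (h : 0 < n) (x : HeckeB K n q) :
    sigma K n q (tau K n q h x) = tau K n q h (sigma K n q x) := by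
  rw [tau_apply, tau_apply, map_mul, map_mul, sigma_T_of_eq_zero _ rfl]
  grind

end Automorphisms

end HeckeB

/-- The assignments `σ(T₀) = -T₀`, `σ(Tᵢ) = Tᵢ` for `i ≥ 1`, and `τ(T₁) = T₀T₁T₀`,
`τ(Tᵢ) = Tᵢ` for `i ≠ 1`, extend to algebra automorphisms `σ, τ` of `H_n(q, 1)`,
and these automorphisms commute: `στ = τσ`. -/
theorem heckeB_automorphisms_sigma_tau (hn : 2 ≤ n) :
    ∃ σ τ : HeckeB K n q ≃ₐ[K] HeckeB K n q,
      σ (T K n q ⟨0, by omega⟩) = -(T K n q ⟨0, by omega⟩) ∧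
      (∀ i : Fin n, 1 ≤ i.val → σ (T K n q i) = T K n q i) ∧
      τ (T K n q ⟨1, by omega⟩) =
        T K n q ⟨0, by omega⟩ * T K n q ⟨1, by omega⟩ * T K n q ⟨0, by omega⟩ ∧
      (∀ i : Fin n, i.val ≠ 1 → τ (T K n q i) = T K n q i) ∧
      (∀ x, σ (τ x) = τ (σ x)) := by
  have hn0 : 0 < n := by omega
  exact ⟨AlgEquiv.ofAlgHom _ _ HeckeB.sigma_comp_sigma HeckeB.sigma_comp_sigma,
    HeckeB.tau K n q hn0, HeckeB.sigma_T_of_eq_zero _ rfl,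
    fun i hi => HeckeB.sigma_T_of_ne_zero i (by omega), HeckeB.tau_apply hn0 _,
    HeckeB.tau_T_of_ne_one hn0, HeckeB.sigma_tau hn0⟩

end
end

section
/- In the bounded quiver algebra KQ/I of Lemma on the quiver 1 ⇄ 2 ⇄ 3 ⇄ 4 with arrows α₁,α₂,α₃ forward and β₁,β₂,β₃ backward, subject to α₁α₂α₃ = 0, β₃β₂β₁ = 0, β₁α₁α₂ = α₂α₃β₃, β₂β₁α₁ = α₃β₃β₂, α₁β₁α₁ = α₁α₂β₂, β₁α₁β₁ = α₂β₂β₁, α₂β₂α₂ = 0 = β₂α₂β₂, α₃β₃α₃ = β₂α₂α₃, β₃α₃β₃ = β₃β₂α₂, and all paths of length ≥ 5 equal to 0: the indecomposable projective e₁·(KQ/I) has dimension 6 and e₂·(KQ/I) has dimension 9. -/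
noncomputable section

open FreeAlgebra

/-- Generators of the bounded quiver algebra on the quiver `1 ⇄ 2 ⇄ 3 ⇄ 4`:
the vertex idempotents `e₁, e₂, e₃, e₄` (indices 0–3), the forward arrows
`α₁ : 1 → 2`, `α₂ : 2 → 3`, `α₃ : 3 → 4` (indices 4–6) and the backward arrows
`β₁ : 2 → 1`, `β₂ : 3 → 2`, `β₃ : 4 → 3` (indices 7–9). -/
abbrev Q4Gen := Fin 10

/-- The defining relations of the bounded quiver algebra `KQ/I`: the `eᵢ` are
orthogonal idempotents summing to `1`, the arrows have the indicated sources and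
targets (paths are composed left to right), together with the relations
`α₁α₂α₃ = 0`, `β₃β₂β₁ = 0`, `β₁α₁α₂ = α₂α₃β₃`, `β₂β₁α₁ = α₃β₃β₂`,
`α₁β₁α₁ = α₁α₂β₂`, `β₁α₁β₁ = α₂β₂β₁`, `α₂β₂α₂ = 0 = β₂α₂β₂`,
`α₃β₃α₃ = β₂α₂α₃`, `β₃α₃β₃ = β₃β₂α₂`, and all paths of length `≥ 5` equal to zero. -/
inductive q4Rel (K : Type) [Field K] :
    FreeAlgebra K Q4Gen → FreeAlgebra K Q4Gen → Prop
  | sum : q4Rel K (ι K 0 + ι K 1 + ι K 2 + ι K 3) 1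
  | idem (i : Fin 10) (h : i.val < 4) : q4Rel K (ι K i * ι K i) (ι K i)
  | orth (i j : Fin 10) (hi : i.val < 4) (hj : j.val < 4) (hij : i ≠ j) :
      q4Rel K (ι K i * ι K j) 0
  -- sources and targets of the arrows: `αᵢ = eᵢ αᵢ e_{i+1}`, `βᵢ = e_{i+1} βᵢ eᵢ`
  | arr_src (i : Fin 3) : q4Rel K (ι K ⟨i.val, by omega⟩ * ι K ⟨4 + i.val, by omega⟩)
      (ι K ⟨4 + i.val, by omega⟩)
  | arr_tgt (i : Fin 3) : q4Rel K (ι K ⟨4 + i.val, by omega⟩ * ι K ⟨i.val + 1, by omega⟩)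
      (ι K ⟨4 + i.val, by omega⟩)
  | back_src (i : Fin 3) : q4Rel K (ι K ⟨i.val + 1, by omega⟩ * ι K ⟨7 + i.val, by omega⟩)
      (ι K ⟨7 + i.val, by omega⟩)
  | back_tgt (i : Fin 3) : q4Rel K (ι K ⟨7 + i.val, by omega⟩ * ι K ⟨i.val, by omega⟩)
      (ι K ⟨7 + i.val, by omega⟩)
  | rel1 : q4Rel K (ι K 4 * ι K 5 * ι K 6) 0
  | rel2 : q4Rel K (ι K 9 * ι K 8 * ι K 7) 0
  | rel3 : q4Rel K (ι K 7 * ι K 4 * ι K 5) (ι K 5 * ι K 6 * ι K 9)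
  | rel4 : q4Rel K (ι K 8 * ι K 7 * ι K 4) (ι K 6 * ι K 9 * ι K 8)
  | rel5 : q4Rel K (ι K 4 * ι K 7 * ι K 4) (ι K 4 * ι K 5 * ι K 8)
  | rel6 : q4Rel K (ι K 7 * ι K 4 * ι K 7) (ι K 5 * ι K 8 * ι K 7)
  | rel7 : q4Rel K (ι K 5 * ι K 8 * ι K 5) 0
  | rel8 : q4Rel K (ι K 8 * ι K 5 * ι K 8) 0
  | rel9 : q4Rel K (ι K 6 * ι K 9 * ι K 6) (ι K 8 * ι K 5 * ι K 6)
  | rel10 : q4Rel K (ι K 9 * ι K 6 * ι K 9) (ι K 9 * ι K 8 * ι K 5)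
  | long (a b c d e : Fin 10) (ha : 4 ≤ a.val) (hb : 4 ≤ b.val) (hc : 4 ≤ c.val)
      (hd : 4 ≤ d.val) (he : 4 ≤ e.val) :
      q4Rel K (ι K a * ι K b * ι K c * ι K d * ι K e) 0

/-- The bounded quiver algebra `KQ/I` of the Lemma. -/
abbrev Q4Alg (K : Type) [Field K] : Type := RingQuot (q4Rel K)

variable (K : Type) [Field K]

/-- The images of the generators in `KQ/I`. -/
def q (i : Q4Gen) : Q4Alg K := RingQuot.mkAlgHom K (q4Rel K) (ι K i)

/-!
The paths `e₁, α₁, α₁α₂, α₁β₁, α₁α₂β₂, α₁α₂β₂β₁` (starting at vertex 1) and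
`e₂, α₂, β₁, α₂α₃, α₂β₂, β₁α₁, α₂α₃β₃, α₂β₂β₁, α₂α₃β₃β₂` (starting at vertex 2) are closed under
right multiplication by the generators: by the relations, each product is again one of these
fifteen paths or zero. So they span `e₁·A` and `e₂·A`. Conversely, this multiplication table,
read as 0/1 matrices, satisfies every defining relation (paths of length `≥ 5` die because the
table is graded by path length and all fifteen paths have length `≤ 4`). This gives a
15-dimensional representation of `A` in which the row of `e₁` (resp. `e₂`) sends the six
(resp. nine) paths to distinct standard basis vectors, so they are linearly independent.
-/

section PartialMapMatrix

variable {R ι : Type*} [Semiring R] [DecidableEq ι]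

def partialMapMatrix (f : ι → Option ι) : Matrix ι ι R :=
  Matrix.of fun i j => if f i = some j then 1 else 0

lemma partialMapMatrix_mul [Fintype ι] (f g : ι → Option ι) :
    (partialMapMatrix f * partialMapMatrix g : Matrix ι ι R) =
      partialMapMatrix fun i => (f i).bind g := by
  ext i j
  cases hf : f i with
  | none => simp [partialMapMatrix, Matrix.mul_apply, hf]
  | some k =>
    simp only [partialMapMatrix, Matrix.mul_apply, Matrix.of_apply, hf, Option.some.injEq,
      Option.bind_some, boole_mul]
    rw [Finset.sum_ite_eq]
    simp

lemma partialMapMatrix_none : (partialMapMatrix fun _ : ι => none : Matrix ι ι R) = 0 := by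
  ext; simp [partialMapMatrix]

lemma partialMapMatrix_row {f : ι → Option ι} {i j : ι} (h : f i = some j) :
    (partialMapMatrix f : Matrix ι ι R) i = Pi.single j 1 := by
  ext k
  simp [partialMapMatrix, h, Pi.single_apply, eq_comm]

end PartialMapMatrix

theorem Submodule.mul_mem_of_adjoin_eq_top {R A : Type*} [CommSemiring R] [Semiring A]
    [Algebra R A] {s : Set A} (hs : Algebra.adjoin R s = ⊤) {N : Submodule R A}
    (hN : ∀ x ∈ N, ∀ g ∈ s, x * g ∈ N) {x : A} (hx : x ∈ N) (y : A) : x * y ∈ N := by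
  have hy : y ∈ Algebra.adjoin R s := hs ▸ Algebra.mem_top
  induction hy using Algebra.adjoin_induction generalizing x with
  | mem g hg => exact hN x hx g hg
  | algebraMap r => simpa only [← Algebra.commutes, ← Algebra.smul_def] using N.smul_mem r hx
  | add y z _ _ hy hz => simpa only [mul_add] using N.add_mem (hy hx) (hz hx)
  | mul y z _ _ hy hz => simpa only [← mul_assoc] using hz (hy hx)

namespace Q4

variable {K}

lemma adjoin_range_q : Algebra.adjoin K (Set.range (q K)) = ⊤ := by
  have : Set.range (q K) = RingQuot.mkAlgHom K (q4Rel K) '' Set.range (ι K) := by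
    rw [← Set.range_comp]; rfl
  rw [this, Algebra.adjoin_image, FreeAlgebra.adjoin_range_ι, Algebra.map_top,
    AlgHom.range_eq_top]
  exact RingQuot.mkAlgHom_surjective K _

def src : Q4Gen → Q4Gen := ![0, 1, 2, 3, 0, 1, 2, 1, 2, 3]

def tgt : Q4Gen → Q4Gen := ![0, 1, 2, 3, 1, 2, 3, 0, 1, 2]

lemma q_mul_q_eq_of_rel {a b : Q4Gen} {y : FreeAlgebra K Q4Gen}
    (h : q4Rel K (ι K a * ι K b) y) : q K a * q K b = RingQuot.mkAlgHom K (q4Rel K) y :=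
  (map_mul _ _ _).symm.trans (RingQuot.mkAlgHom_rel K h)

lemma mul_mk_eq_of_rel {x y : FreeAlgebra K Q4Gen} (h : q4Rel K x y) (z : Q4Alg K) :
    z * RingQuot.mkAlgHom K (q4Rel K) x = z * RingQuot.mkAlgHom K (q4Rel K) y :=
  congrArg (z * ·) (RingQuot.mkAlgHom_rel K h)

lemma q_mul_q_of_ne {i j : Q4Gen} (hi : i.val < 4) (hj : j.val < 4) (hij : i ≠ j) :
    q K i * q K j = 0 :=
  (q_mul_q_eq_of_rel (q4Rel.orth i j hi hj hij)).trans (map_zero _)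

lemma q_src_mul (g : Q4Gen) : q K (src g) * q K g = q K g := by
  fin_cases g
  exacts [q_mul_q_eq_of_rel (q4Rel.idem 0 (by decide)),
    q_mul_q_eq_of_rel (q4Rel.idem 1 (by decide)), q_mul_q_eq_of_rel (q4Rel.idem 2 (by decide)),
    q_mul_q_eq_of_rel (q4Rel.idem 3 (by decide)), q_mul_q_eq_of_rel (q4Rel.arr_src 0),
    q_mul_q_eq_of_rel (q4Rel.arr_src 1), q_mul_q_eq_of_rel (q4Rel.arr_src 2),
    q_mul_q_eq_of_rel (q4Rel.back_src 0), q_mul_q_eq_of_rel (q4Rel.back_src 1),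
    q_mul_q_eq_of_rel (q4Rel.back_src 2)]

lemma q_mul_tgt (g : Q4Gen) : q K g * q K (tgt g) = q K g := by
  fin_cases g
  exacts [q_mul_q_eq_of_rel (q4Rel.idem 0 (by decide)),
    q_mul_q_eq_of_rel (q4Rel.idem 1 (by decide)), q_mul_q_eq_of_rel (q4Rel.idem 2 (by decide)),
    q_mul_q_eq_of_rel (q4Rel.idem 3 (by decide)), q_mul_q_eq_of_rel (q4Rel.arr_tgt 0),
    q_mul_q_eq_of_rel (q4Rel.arr_tgt 1), q_mul_q_eq_of_rel (q4Rel.arr_tgt 2),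
    q_mul_q_eq_of_rel (q4Rel.back_tgt 0), q_mul_q_eq_of_rel (q4Rel.back_tgt 1),
    q_mul_q_eq_of_rel (q4Rel.back_tgt 2)]

lemma q_mul_q_eq_zero {a b : Q4Gen} (h : tgt a ≠ src b) : q K a * q K b = 0 := by
  have hv : q K (tgt a) * q K (src b) = 0 :=
    q_mul_q_of_ne (by fin_cases a <;> decide) (by fin_cases b <;> decide) h
  rw [← q_mul_tgt a, ← q_src_mul b, mul_assoc, ← mul_assoc (q K (tgt a)), hv, zero_mul,
    mul_zero]

lemma q_mul_q_of_tgt_eq {a b : Q4Gen} (h : tgt a = b) : q K a * q K b = q K a := by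
  rw [← h, q_mul_tgt]

lemma mul_q_mul_q_of_tgt_eq (x : Q4Alg K) {a b : Q4Gen} (h : tgt a = b) :
    x * q K a * q K b = x * q K a := by
  rw [mul_assoc, q_mul_q_of_tgt_eq h]

lemma mul_q_mul_q_eq_zero (x : Q4Alg K) {a b : Q4Gen} (h : tgt a ≠ src b) :
    x * q K a * q K b = 0 := by
  rw [mul_assoc, q_mul_q_eq_zero h, mul_zero]

local notation "e₁" => q K 0
local notation "e₂" => q K 1
local notation "α₁" => q K 4
local notation "α₂" => q K 5
local notation "α₃" => q K 6
local notation "β₁" => q K 7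
local notation "β₂" => q K 8
local notation "β₃" => q K 9

lemma mul_α₁α₂α₃ (x : Q4Alg K) : x * α₁ * α₂ * α₃ = 0 := by
  simpa only [q, map_mul, map_zero, mul_zero, mul_assoc] using mul_mk_eq_of_rel q4Rel.rel1 x

lemma mul_β₃β₂β₁ (x : Q4Alg K) : x * β₃ * β₂ * β₁ = 0 := by
  simpa only [q, map_mul, map_zero, mul_zero, mul_assoc] using mul_mk_eq_of_rel q4Rel.rel2 x

lemma mul_β₁α₁α₂ (x : Q4Alg K) : x * β₁ * α₁ * α₂ = x * α₂ * α₃ * β₃ := by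
  simpa only [q, map_mul, mul_assoc] using mul_mk_eq_of_rel q4Rel.rel3 x

lemma mul_β₂β₁α₁ (x : Q4Alg K) : x * β₂ * β₁ * α₁ = x * α₃ * β₃ * β₂ := by
  simpa only [q, map_mul, mul_assoc] using mul_mk_eq_of_rel q4Rel.rel4 x

lemma mul_α₁β₁α₁ (x : Q4Alg K) : x * α₁ * β₁ * α₁ = x * α₁ * α₂ * β₂ := by
  simpa only [q, map_mul, mul_assoc] using mul_mk_eq_of_rel q4Rel.rel5 x

lemma mul_β₁α₁β₁ (x : Q4Alg K) : x * β₁ * α₁ * β₁ = x * α₂ * β₂ * β₁ := by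
  simpa only [q, map_mul, mul_assoc] using mul_mk_eq_of_rel q4Rel.rel6 x

lemma mul_α₂β₂α₂ (x : Q4Alg K) : x * α₂ * β₂ * α₂ = 0 := by
  simpa only [q, map_mul, map_zero, mul_zero, mul_assoc] using mul_mk_eq_of_rel q4Rel.rel7 x

lemma mul_α₃β₃α₃ (x : Q4Alg K) : x * α₃ * β₃ * α₃ = x * β₂ * α₂ * α₃ := by
  simpa only [q, map_mul, mul_assoc] using mul_mk_eq_of_rel q4Rel.rel9 x

lemma mul_five_arrows_eq_zero (x : Q4Alg K) {a b c d e : Q4Gen} (ha : 4 ≤ a.val)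
    (hb : 4 ≤ b.val) (hc : 4 ≤ c.val) (hd : 4 ≤ d.val) (he : 4 ≤ e.val) :
    x * q K a * q K b * q K c * q K d * q K e = 0 := by
  simpa only [q, map_mul, map_zero, mul_zero, mul_assoc] using
    mul_mk_eq_of_rel (q4Rel.long a b c d e ha hb hc hd he) x

def basisPath : Fin 15 → Q4Alg K :=
  ![e₁, e₁ * α₁, e₁ * α₁ * α₂, e₁ * α₁ * β₁, e₁ * α₁ * α₂ * β₂, e₁ * α₁ * α₂ * β₂ * β₁,
    e₂, e₂ * α₂, e₂ * β₁, e₂ * α₂ * α₃, e₂ * α₂ * β₂, e₂ * β₁ * α₁, e₂ * α₂ * α₃ * β₃,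
    e₂ * α₂ * β₂ * β₁, e₂ * α₂ * α₃ * β₃ * β₂]

def basisPathTgt : Fin 15 → Q4Gen := ![0, 1, 2, 0, 1, 0, 1, 2, 0, 3, 1, 1, 2, 0, 1]

-- `(g, k, j)` records `basisPath k * q g = basisPath j`; arrows not listed for `k` kill it.
def arrowTable : List (Q4Gen × Fin 15 × Fin 15) :=
  [(4, 0, 1), (4, 3, 4), (4, 8, 11), (4, 13, 14), (5, 1, 2), (5, 6, 7), (5, 11, 12), (6, 7, 9),
   (7, 1, 3), (7, 4, 5), (7, 6, 8), (7, 10, 13), (7, 11, 13), (8, 2, 4), (8, 7, 10), (8, 12, 14),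
   (9, 9, 12)]

def pathAct (g : Q4Gen) (k : Fin 15) : Option (Fin 15) :=
  if g.val < 4 then if basisPathTgt k = g then some k else none
  else (arrowTable.find? fun t => t.1 = g ∧ t.2.1 = k).map fun t => t.2.2

lemma basisPath_mul_q (k : Fin 15) (g : Q4Gen) :
    basisPath k * q K g = (pathAct g k).elim 0 basisPath := by
  fin_cases k <;> fin_cases g <;>
    simp (disch := decide) [basisPath, pathAct, arrowTable, basisPathTgt, q_mul_q_eq_zero,
      mul_q_mul_q_eq_zero, q_mul_q_of_tgt_eq, mul_q_mul_q_of_tgt_eq, mul_α₁α₂α₃, mul_β₃β₂β₁,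
      mul_β₁α₁α₂, mul_β₂β₁α₁, mul_α₁β₁α₁, mul_β₁α₁β₁, mul_α₂β₂α₂, mul_α₃β₃α₃,
      mul_five_arrows_eq_zero]

def pathLength : Fin 15 → ℕ := ![0, 1, 2, 2, 3, 4, 0, 1, 1, 2, 2, 2, 3, 3, 4]

-- The zero path `none` gets length 5: past the longest nonzero path, so it absorbs arrows.
def optPathLength (o : Option (Fin 15)) : ℕ := o.elim 5 pathLength

lemma optPathLength_bind_pathAct (o : Option (Fin 15)) {g : Q4Gen} (hg : 4 ≤ g.val) :
    min 5 (optPathLength o + 1) ≤ optPathLength (o.bind (pathAct g)) := by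
  revert o g; decide

lemma pathAct_five_arrows_eq_none {a b c d e : Q4Gen} (ha : 4 ≤ a.val) (hb : 4 ≤ b.val)
    (hc : 4 ≤ c.val) (hd : 4 ≤ d.val) (he : 4 ≤ e.val) (k : Fin 15) :
    ((((pathAct a k).bind (pathAct b)).bind (pathAct c)).bind (pathAct d)).bind (pathAct e) =
      none := by
  have h₁ := optPathLength_bind_pathAct (some k) ha
  have h₂ := optPathLength_bind_pathAct (pathAct a k) hb
  have h₃ := optPathLength_bind_pathAct ((pathAct a k).bind (pathAct b)) hc
  have h₄ := optPathLength_bind_pathAct (((pathAct a k).bind (pathAct b)).bind (pathAct c)) hd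
  have h₅ := optPathLength_bind_pathAct
    ((((pathAct a k).bind (pathAct b)).bind (pathAct c)).bind (pathAct d)) he
  have eq_none_of_five_le : ∀ o, 5 ≤ optPathLength o → o = none := by decide
  exact eq_none_of_five_le _ (by simp only [Option.bind_some] at h₁; omega)

lemma sum_partialMapMatrix_pathAct_vertex :
    (partialMapMatrix (pathAct 0) + partialMapMatrix (pathAct 1) + partialMapMatrix (pathAct 2) +
      partialMapMatrix (pathAct 3) : Matrix (Fin 15) (Fin 15) K) = 1 := by
  ext i j
  by_cases hij : i = j
  · subst hij
    fin_cases i <;> simp [partialMapMatrix, pathAct, basisPathTgt]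
  · simp [partialMapMatrix, pathAct, hij]

def freeRep : FreeAlgebra K Q4Gen →ₐ[K] Matrix (Fin 15) (Fin 15) K :=
  FreeAlgebra.lift K fun g => partialMapMatrix (pathAct g)

lemma freeRep_rel ⦃x y : FreeAlgebra K Q4Gen⦄ (h : q4Rel K x y) : freeRep x = freeRep y := by
  induction h
  case sum => simpa [freeRep] using sum_partialMapMatrix_pathAct_vertex
  case long a b c d e ha hb hc hd he =>
    simp only [freeRep, map_mul, map_zero, FreeAlgebra.lift_ι_apply, partialMapMatrix_mul]
    rw [← partialMapMatrix_none]
    exact congrArg partialMapMatrix (funext (pathAct_five_arrows_eq_none ha hb hc hd he))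
  all_goals
    simp only [freeRep, map_mul, FreeAlgebra.lift_ι_apply, partialMapMatrix_mul, map_zero,
      ← partialMapMatrix_none]
    congr 1
  case idem i _ => revert i; decide
  case orth i j _ _ _ => revert i j; decide
  case arr_src i | arr_tgt i | back_src i | back_tgt i => revert i; decide
  all_goals decide

def rep : Q4Alg K →ₐ[K] Matrix (Fin 15) (Fin 15) K :=
  RingQuot.liftAlgHom K ⟨freeRep, freeRep_rel⟩

lemma rep_q (g : Q4Gen) : rep (q K g) = partialMapMatrix (pathAct g) := by
  rw [q, rep, RingQuot.liftAlgHom_mkAlgHom_apply]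
  exact FreeAlgebra.lift_ι_apply _ _

-- The index of the trivial path at the source vertex of `basisPath k`.
def pathSrc (k : Fin 15) : Fin 15 := if k.val < 6 then 0 else 6

lemma pathSrc_eq_of_pathAct {g : Q4Gen} {k j : Fin 15} (h : pathAct g k = some j) :
    pathSrc j = pathSrc k := by
  revert g k j; decide

lemma basisPath_pathSrc_mul (k : Fin 15) :
    basisPath (K := K) (pathSrc k) * basisPath k = basisPath k := by
  fin_cases k <;> simp (disch := decide) [basisPath, pathSrc, ← mul_assoc, q_mul_q_of_tgt_eq]

lemma rep_basisPath_pathSrc (k : Fin 15) :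
    rep (basisPath (K := K) k) (pathSrc k) = Pi.single k 1 := by
  fin_cases k <;>
    simp only [basisPath, Fin.reduceFinMk, Matrix.cons_val, map_mul, rep_q,
      partialMapMatrix_mul] <;>
    apply partialMapMatrix_row <;> decide

def spanPathsFrom (r : Fin 15) : Submodule K (Q4Alg K) :=
  Submodule.span K (Set.range fun k : {k // pathSrc k = r} => basisPath k.1)

lemma mul_q_mem_spanPathsFrom {r : Fin 15} {x : Q4Alg K} (hx : x ∈ spanPathsFrom r)
    (g : Q4Gen) : x * q K g ∈ spanPathsFrom r := by
  induction hx using Submodule.span_induction with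
  | mem x hx =>
    obtain ⟨⟨k, hk⟩, rfl⟩ := hx
    rw [basisPath_mul_q]
    cases h : pathAct g k with
    | none => exact Submodule.zero_mem _
    | some j => exact Submodule.subset_span ⟨⟨j, (pathSrc_eq_of_pathAct h).trans hk⟩, rfl⟩
  | zero => simp
  | add x y _ _ hx hy => simpa only [add_mul] using Submodule.add_mem _ hx hy
  | smul c x _ hx => simpa only [smul_mul_assoc] using Submodule.smul_mem _ c hx

lemma span_basisPath_mul_eq_spanPathsFrom {r : Fin 15} (hr : pathSrc r = r) :
    Submodule.span K {x : Q4Alg K | ∃ y, x = basisPath r * y} = spanPathsFrom r := by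
  apply le_antisymm
  · rw [Submodule.span_le]
    rintro _ ⟨y, rfl⟩
    refine Submodule.mul_mem_of_adjoin_eq_top (N := spanPathsFrom r) adjoin_range_q ?_
      (Submodule.subset_span ⟨⟨r, hr⟩, rfl⟩) y
    rintro x hx _ ⟨g, rfl⟩
    exact mul_q_mem_spanPathsFrom hx g
  · rw [spanPathsFrom, Submodule.span_le]
    rintro _ ⟨⟨k, rfl⟩, rfl⟩
    exact Submodule.subset_span ⟨basisPath k, (basisPath_pathSrc_mul k).symm⟩

lemma linearIndependent_basisPath (r : Fin 15) :
    LinearIndependent K fun k : {k // pathSrc k = r} => basisPath (K := K) k.1 := by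
  let row : Q4Alg K →ₗ[K] Fin 15 → K := LinearMap.proj r ∘ₗ (rep (K := K)).toLinearMap
  have hrow (k : {k // pathSrc k = r}) :
      row (basisPath k.1) = Pi.basisFun K (Fin 15) k.1 := by
    obtain ⟨k, rfl⟩ := k
    rw [Pi.basisFun_apply]
    exact rep_basisPath_pathSrc k
  refine LinearIndependent.of_comp row ?_
  rw [show row ∘ _ = _ from funext hrow]
  exact (Pi.basisFun K (Fin 15)).linearIndependent.comp _ Subtype.val_injective

lemma finrank_span_basisPath_mul {r : Fin 15} (hr : pathSrc r = r) :
    Module.finrank K (Submodule.span K {x : Q4Alg K | ∃ y, x = basisPath r * y}) =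
      Fintype.card {k // pathSrc k = r} := by
  rw [span_basisPath_mul_eq_spanPathsFrom hr, spanPathsFrom,
    finrank_span_eq_card (linearIndependent_basisPath r)]

end Q4

theorem q4_projective_dimensions :
    Module.finrank K
        (Submodule.span K {x : Q4Alg K | ∃ y, x = q K 0 * y}) = 6 ∧
    Module.finrank K
        (Submodule.span K {x : Q4Alg K | ∃ y, x = q K 1 * y}) = 9 :=
  ⟨Q4.finrank_span_basisPath_mul (r := 0) rfl, Q4.finrank_span_basisPath_mul (r := 6) rfl⟩

end
end
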